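/- arXiv:2407.13732 — 2 statements merged into one kernel-verified Lean document; each statement's English description precedes it below -/
import Mathlib

section
/- Excess error bound over all measurable functions for Ψ(t) = 1 − t and arbitrary cost (Corollary 4.5): let H_all be the set of all hypotheses (all functions X×Ȳ → ℝ measurable in x), let c : X×[n] → [0,1] be any measurable cost, and suppose Ψ(t) = 1 − t. Then for every h ∈ H_all, E_{L_def}(h) − E*_{L_def}(H_all) ≤ (n+1)·( E_{L_Ψ}(h) − E*_{L_Ψ}(H_all) ). -/
open MeasureTheory

/-- Softmax of a score vector. -/
noncomputable def smax {m : ℕ} (v : Fin m → ℝ) (y : Fin m) : ℝ :=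
  Real.exp (v y) / ∑ y' : Fin m, Real.exp (v y')

/-- Deferral loss `L_def(h,x,y) = 1_{𝗁(x)≠y}·1_{𝗁(x)∈[n]} + c(x,y)·1_{𝗁(x)=n+1}`,
where the prediction `𝗁(x) = pred (h x)` and `Fin.last n` is the deferral label. -/
noncomputable def defLoss {X : Type*} {n : ℕ} (pred : (Fin (n + 1) → ℝ) → Fin (n + 1))
    (c : X → Fin n → ℝ) (h : X → Fin (n + 1) → ℝ) (x : X) (y : Fin n) : ℝ :=
  (if pred (h x) ≠ y.castSucc ∧ pred (h x) ≠ Fin.last n then 1 else 0)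
    + c x y * (if pred (h x) = Fin.last n then 1 else 0)

/-- RL2D surrogate loss
`L_Ψ(h,x,y) = c(x,y)·Ψ(s_y(x;h)) + (1 − c(x,y))·Ψ(s_y(x;h) + s_{n+1}(x;h))`. -/
noncomputable def surLoss {X : Type*} {n : ℕ} (Ψ : ℝ → ℝ) (c : X → Fin n → ℝ)
    (h : X → Fin (n + 1) → ℝ) (x : X) (y : Fin n) : ℝ :=
  c x y * Ψ (smax (h x) y.castSucc)
    + (1 - c x y) * Ψ (smax (h x) y.castSucc + smax (h x) (Fin.last n))

/-- Conditional error `C_L(h,x) = Σ_{y∈[n]} p(x,y)·L(h,x,y)`. -/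
noncomputable def condErr {X : Type*} {n : ℕ} (p : X → Fin n → ℝ)
    (L : (X → Fin (n + 1) → ℝ) → X → Fin n → ℝ) (h : X → Fin (n + 1) → ℝ) (x : X) : ℝ :=
  ∑ y : Fin n, p x y * L h x y

/-- Generalization error `E_L(h) = ∫ Σ_{y∈[n]} p(x,y)·L(h,x,y) dμ(x)`. -/
noncomputable def genErr {X : Type*} [MeasurableSpace X] {n : ℕ} (μ : Measure X)
    (p : X → Fin n → ℝ) (L : (X → Fin (n + 1) → ℝ) → X → Fin n → ℝ)
    (h : X → Fin (n + 1) → ℝ) : ℝ :=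
  ∫ x, condErr p L h x ∂μ

/-- Best-in-class generalization error `E*_L(H) = inf_{h∈H} E_L(h)`. -/
noncomputable def bestErr {X : Type*} [MeasurableSpace X] {n : ℕ} (μ : Measure X)
    (p : X → Fin n → ℝ) (L : (X → Fin (n + 1) → ℝ) → X → Fin n → ℝ)
    (H : Set (X → Fin (n + 1) → ℝ)) : ℝ :=
  sInf ((genErr μ p L) '' H)

/-- Minimizability gap `M_L(H) = E*_L(H) − ∫ inf_{h∈H} C_L(h,x) dμ(x)`. -/
noncomputable def minGap {X : Type*} [MeasurableSpace X] {n : ℕ} (μ : Measure X)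
    (p : X → Fin n → ℝ) (L : (X → Fin (n + 1) → ℝ) → X → Fin n → ℝ)
    (H : Set (X → Fin (n + 1) → ℝ)) : ℝ :=
  bestErr μ p L H - ∫ x, sInf ((fun h => condErr p L h x) '' H) ∂μ

/-- `H` is symmetric: there is a family `F` of functions `X → ℝ` such that for every
`x`, `{(h(x,1),…,h(x,n+1)) : h ∈ H} = {(f₁(x),…,f_{n+1}(x)) : f₁,…,f_{n+1} ∈ F}`. -/
def SymmetricHyp {X : Type*} {n : ℕ} (H : Set (X → Fin (n + 1) → ℝ)) : Prop :=
  ∃ F : Set (X → ℝ), ∀ x : X,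
    (fun h : X → Fin (n + 1) → ℝ => h x) '' H =
      {v : Fin (n + 1) → ℝ |
        ∃ f : Fin (n + 1) → X → ℝ, (∀ k, f k ∈ F) ∧ v = fun k => f k x}

/-- `H` is complete: for every `x` and `y`, `{h(x,y) : h ∈ H} = ℝ`. -/
def CompleteHyp {X : Type*} {n : ℕ} (H : Set (X → Fin (n + 1) → ℝ)) : Prop :=
  ∀ (x : X) (y : Fin (n + 1)),
    (fun h : X → Fin (n + 1) → ℝ => h x y) '' H = Set.univ

/-!
Write `q x k` (`extProb`) for the probability that predicting `k` is correct. Then the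
conditional deferral error of `h` is `1 - q x (𝗁 x)` and, for `Ψ t = 1 - t`, the conditional
surrogate error is `1 - ∑ k, q x k * s_k(x; h)`. Over all measurable hypotheses, both best-in-class
errors are compared with `∫ (1 - max q)`: the deferral one pointwise lies above it, and the
surrogate one is approached by the hypotheses `T • q` as `T → ∞`. Since `𝗁 x` maximizes the
softmax, `s_{𝗁 x} ≥ 1 / (n + 1)`, hence
`max q - q (𝗁 x) ≤ (n + 1) * (max q - ∑ k, q k * s_k)` pointwise, and integrating gives the bound.
-/

section Softmax
variable {m : ℕ} [NeZero m]

lemma smax_pos (v : Fin m → ℝ) (k : Fin m) : 0 < smax v k :=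
  div_pos (Real.exp_pos _) (Finset.sum_pos (fun _ _ => Real.exp_pos _) Finset.univ_nonempty)

lemma sum_smax (v : Fin m → ℝ) : ∑ k, smax v k = 1 := by
  simp only [smax, ← Finset.sum_div]
  exact div_self (Finset.sum_pos (fun _ _ => Real.exp_pos _) Finset.univ_nonempty).ne'

lemma smax_le_smax (v : Fin m → ℝ) {i j : Fin m} (h : v i ≤ v j) : smax v i ≤ smax v j := by
  unfold smax
  gcongr

lemma sub_sum_mul_smax (q v : Fin m → ℝ) (M : ℝ) :
    M - ∑ k, q k * smax v k = ∑ k, (M - q k) * smax v k := by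
  simp only [sub_mul, Finset.sum_sub_distrib, ← Finset.mul_sum, sum_smax, mul_one]

lemma sum_mul_smax_mem_Icc {q : Fin m → ℝ} (hq : ∀ k, q k ∈ Set.Icc (0 : ℝ) 1)
    (v : Fin m → ℝ) : ∑ k, q k * smax v k ∈ Set.Icc (0 : ℝ) 1 := by
  refine ⟨Finset.sum_nonneg fun k _ => mul_nonneg (hq k).1 (smax_pos v k).le, ?_⟩
  calc ∑ k, q k * smax v k ≤ ∑ k, smax v k :=
        Finset.sum_le_sum fun k _ => mul_le_of_le_one_left (smax_pos v k).le (hq k).2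
    _ = 1 := sum_smax v

/-- The softmax of `v` puts mass at least `1 / m` on a maximizer of `v`. -/
lemma sub_le_card_mul_sub_sum_mul_smax {q v : Fin m → ℝ} {M : ℝ} (hq : ∀ k, q k ≤ M)
    {j : Fin m} (hj : ∀ k, v k ≤ v j) :
    M - q j ≤ m * (M - ∑ k, q k * smax v k) := by
  have hmass : 1 ≤ m * smax v j := by
    calc (1 : ℝ) = ∑ k, smax v k := (sum_smax v).symm
      _ ≤ ∑ _k : Fin m, smax v j := Finset.sum_le_sum fun k _ => smax_le_smax v (hj k)
      _ = m * smax v j := by simp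
  have hterm : (M - q j) * smax v j ≤ ∑ k, (M - q k) * smax v k :=
    Finset.single_le_sum (f := fun k => (M - q k) * smax v k)
      (fun k _ => mul_nonneg (sub_nonneg.2 (hq k)) (smax_pos v k).le) (Finset.mem_univ j)
  rw [sub_sum_mul_smax]
  nlinarith [sub_nonneg.2 (hq j)]

/-- Each term `(q j - q k) * smax (T • q) k` is at most `1 / T`, because `x ≤ exp x`. -/
lemma sub_sum_mul_smax_smul_le (q : Fin m → ℝ) (j : Fin m) {T : ℝ} (hT : 0 < T) :
    q j - ∑ k, q k * smax (T • q) k ≤ m / T := by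
  have hterm : ∀ k, (q j - q k) * smax (T • q) k ≤ 1 / T := by
    intro k
    have hden : Real.exp (T * q j) ≤ ∑ i, Real.exp (T * q i) :=
      Finset.single_le_sum (f := fun i => Real.exp (T * q i))
        (fun _ _ => (Real.exp_pos _).le) (Finset.mem_univ j)
    have hlin := Real.add_one_le_exp (T * (q j - q k))
    have hexp : Real.exp (T * (q j - q k)) * smax (T • q) k ≤ 1 := by
      simp only [smax, Pi.smul_apply, smul_eq_mul]
      rw [mul_div_assoc', div_le_one (lt_of_lt_of_le (Real.exp_pos _) hden), ← Real.exp_add]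
      rwa [show T * (q j - q k) + T * q k = T * q j by ring]
    rw [le_div_iff₀ hT]
    nlinarith [smax_pos (T • q) k]
  rw [sub_sum_mul_smax]
  calc ∑ k, (q j - q k) * smax (T • q) k ≤ ∑ _k : Fin m, 1 / T :=
        Finset.sum_le_sum fun k _ => hterm k
    _ = m / T := by simp [div_eq_mul_inv]

end Softmax

section ConditionalError
variable {X : Type*} {n : ℕ} (p c : X → Fin n → ℝ)

/-- `extProb p c x k` is the conditional probability that the prediction `k` incurs no loss:
`p x y` for a label `y`, and the expected `1 - c` for the deferral label `Fin.last n`. -/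
noncomputable def extProb (x : X) : Fin (n + 1) → ℝ :=
  Fin.snoc (p x) (∑ y, p x y * (1 - c x y))

variable {p c}

lemma extProb_mem_Icc (hp0 : ∀ x y, 0 ≤ p x y) (hp1 : ∀ x, ∑ y, p x y = 1)
    (hc : ∀ x y, c x y ∈ Set.Icc (0 : ℝ) 1) (x : X) (k : Fin (n + 1)) :
    extProb p c x k ∈ Set.Icc (0 : ℝ) 1 := by
  rw [← hp1 x]
  induction k using Fin.lastCases with
  | last =>
    simp only [extProb, Fin.snoc_last]
    exact ⟨Finset.sum_nonneg fun y _ => mul_nonneg (hp0 x y) (sub_nonneg.2 (hc x y).2),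
      Finset.sum_le_sum fun y _ => mul_le_of_le_one_right (hp0 x y) (sub_le_self _ (hc x y).1)⟩
  | cast y =>
    simpa [extProb, hp0 x y] using
      Finset.single_le_sum (fun i _ => hp0 x i) (Finset.mem_univ y)

lemma condErr_defLoss (hp1 : ∀ x, ∑ y, p x y = 1) (pred : (Fin (n + 1) → ℝ) → Fin (n + 1))
    (h : X → Fin (n + 1) → ℝ) (x : X) :
    condErr p (defLoss pred c) h x = 1 - extProb p c x (pred (h x)) := by
  simp only [condErr, defLoss]
  rcases Fin.eq_castSucc_or_eq_last (pred (h x)) with ⟨y₀, hy⟩ | hy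
  · have hterm : ∀ y, p x y * ((if y₀.castSucc ≠ y.castSucc ∧ y₀.castSucc ≠ Fin.last n
          then (1 : ℝ) else 0) + c x y * (if y₀.castSucc = Fin.last n then 1 else 0))
        = p x y - if y₀ = y then p x y else 0 := by
      intro y
      by_cases hyy : y₀ = y <;> simp [hyy, (Fin.castSucc_lt_last y₀).ne]
    simp only [hy, hterm, Finset.sum_sub_distrib, hp1 x, Finset.sum_ite_eq, Finset.mem_univ,
      if_true, extProb, Fin.snoc_castSucc]
  · simp only [hy, extProb, Fin.snoc_last, ne_eq, not_true_eq_false, and_false, if_false,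
      if_true, zero_add, mul_one, mul_sub, Finset.sum_sub_distrib, hp1 x]
    ring

lemma condErr_surLoss (hp1 : ∀ x, ∑ y, p x y = 1) (h : X → Fin (n + 1) → ℝ) (x : X) :
    condErr p (surLoss (fun t => 1 - t) c) h x
      = 1 - ∑ k, extProb p c x k * smax (h x) k := by
  simp only [condErr, surLoss, Fin.sum_univ_castSucc, extProb, Fin.snoc_castSucc,
    Fin.snoc_last, Finset.sum_mul]
  have hterm : ∀ y, p x y * (c x y * (1 - smax (h x) y.castSucc)
        + (1 - c x y) * (1 - (smax (h x) y.castSucc + smax (h x) (Fin.last n))))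
      = p x y - p x y * smax (h x) y.castSucc
        - p x y * (1 - c x y) * smax (h x) (Fin.last n) := fun y => by ring
  simp only [hterm, Finset.sum_sub_distrib, hp1 x]
  ring

lemma condErr_surLoss_mem_Icc (hp1 : ∀ x, ∑ y, p x y = 1)
    (hq01 : ∀ x k, extProb p c x k ∈ Set.Icc (0 : ℝ) 1) (h : X → Fin (n + 1) → ℝ) (x : X) :
    condErr p (surLoss (fun t => 1 - t) c) h x ∈ Set.Icc (0 : ℝ) 1 := by
  obtain ⟨h0, h1⟩ := sum_mul_smax_mem_Icc (hq01 x) (h x)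
  rw [condErr_surLoss hp1]
  constructor <;> linarith

end ConditionalError

section Errors
variable {X : Type*} [MeasurableSpace X] {μ : Measure X} {n : ℕ} {p c : X → Fin n → ℝ}

lemma measurable_smax {h : X → Fin (n + 1) → ℝ} (hh : Measurable h) (k : Fin (n + 1)) :
    Measurable fun x => smax (h x) k := by
  unfold smax
  fun_prop

lemma measurable_extProb (hpmeas : ∀ y, Measurable fun x => p x y)
    (hcmeas : ∀ y, Measurable fun x => c x y) (k : Fin (n + 1)) :
    Measurable fun x => extProb p c x k := by
  induction k using Fin.lastCases with
  | last => simp only [extProb, Fin.snoc_last]; fun_prop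
  | cast y => simpa [extProb] using hpmeas y

lemma integrable_one_sub_iSup_extProb [IsFiniteMeasure μ]
    (hq : ∀ k, Measurable fun x => extProb p c x k)
    (hq01 : ∀ x k, extProb p c x k ∈ Set.Icc (0 : ℝ) 1) :
    Integrable (fun x => 1 - ⨆ k, extProb p c x k) μ := by
  refine .of_mem_Icc 0 1 (measurable_const.sub (Measurable.iSup hq)).aemeasurable
    (ae_of_all _ fun x => ?_)
  have h0 : 0 ≤ ⨆ k, extProb p c x k :=
    (hq01 x 0).1.trans (le_ciSup (Finite.bddAbove_range _) 0)
  have h1 : ⨆ k, extProb p c x k ≤ 1 := ciSup_le fun k => (hq01 x k).2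
  constructor <;> linarith

lemma integrable_condErr_defLoss [IsFiniteMeasure μ] (hp1 : ∀ x, ∑ y, p x y = 1)
    (hq : ∀ k, Measurable fun x => extProb p c x k)
    (hq01 : ∀ x k, extProb p c x k ∈ Set.Icc (0 : ℝ) 1)
    {pred : (Fin (n + 1) → ℝ) → Fin (n + 1)} (hpredmeas : Measurable pred)
    {h : X → Fin (n + 1) → ℝ} (hh : Measurable h) :
    Integrable (condErr p (defLoss pred c) h) μ := by
  have hmeas : Measurable fun x => extProb p c x (pred (h x)) :=
    (measurable_from_prod_countable_left (f := Function.uncurry (extProb p c)) hq).comp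
      (measurable_id.prodMk (hpredmeas.comp hh))
  rw [funext (condErr_defLoss hp1 pred h)]
  refine .of_mem_Icc 0 1 (measurable_const.sub hmeas).aemeasurable (ae_of_all _ fun x => ?_)
  obtain ⟨h0, h1⟩ := hq01 x (pred (h x))
  constructor <;> linarith

lemma integrable_condErr_surLoss [IsFiniteMeasure μ] (hp1 : ∀ x, ∑ y, p x y = 1)
    (hq : ∀ k, Measurable fun x => extProb p c x k)
    (hq01 : ∀ x k, extProb p c x k ∈ Set.Icc (0 : ℝ) 1)
    {h : X → Fin (n + 1) → ℝ} (hh : Measurable h) :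
    Integrable (condErr p (surLoss (fun t => 1 - t) c) h) μ := by
  refine .of_mem_Icc 0 1 ?_ (ae_of_all _ (condErr_surLoss_mem_Icc hp1 hq01 h))
  rw [funext (condErr_surLoss hp1 h)]
  have hs := measurable_smax hh
  fun_prop

lemma integral_le_bestErr_defLoss [IsFiniteMeasure μ] (hp1 : ∀ x, ∑ y, p x y = 1)
    (hq : ∀ k, Measurable fun x => extProb p c x k)
    (hq01 : ∀ x k, extProb p c x k ∈ Set.Icc (0 : ℝ) 1)
    {pred : (Fin (n + 1) → ℝ) → Fin (n + 1)} (hpredmeas : Measurable pred) :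
    ∫ x, 1 - ⨆ k, extProb p c x k ∂μ ≤
      bestErr μ p (defLoss pred c) {h | Measurable h} := by
  refine le_csInf ⟨_, 0, measurable_const, rfl⟩ ?_
  rintro _ ⟨h, hh, rfl⟩
  refine integral_mono (integrable_one_sub_iSup_extProb hq hq01)
    (integrable_condErr_defLoss hp1 hq hq01 hpredmeas hh) fun x => ?_
  rw [condErr_defLoss hp1]
  exact sub_le_sub_left (le_ciSup (Finite.bddAbove_range _) _) 1

lemma bestErr_surLoss_le_integral [IsProbabilityMeasure μ] (hp1 : ∀ x, ∑ y, p x y = 1)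
    (hq : ∀ k, Measurable fun x => extProb p c x k)
    (hq01 : ∀ x k, extProb p c x k ∈ Set.Icc (0 : ℝ) 1) :
    bestErr μ p (surLoss (fun t => 1 - t) c) {h | Measurable h} ≤
      ∫ x, 1 - ⨆ k, extProb p c x k ∂μ := by
  have hbdd : BddBelow (genErr μ p (surLoss (fun t => 1 - t) c) '' {h | Measurable h}) := by
    refine ⟨0, ?_⟩
    rintro _ ⟨h, -, rfl⟩
    exact integral_nonneg fun x => (condErr_surLoss_mem_Icc hp1 hq01 h x).1
  refine le_of_forall_pos_le_add fun ε hε => ?_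
  set T : ℝ := ((n : ℝ) + 1) / ε
  have hT : 0 < T := by positivity
  have hg : Measurable fun x => T • extProb p c x := by
    refine measurable_pi_lambda _ fun k => ?_
    simpa using (hq k).const_mul T
  have hpt : ∀ x, condErr p (surLoss (fun t => 1 - t) c) (fun x => T • extProb p c x) x ≤
      (1 - ⨆ k, extProb p c x k) + ε := by
    intro x
    obtain ⟨j, hj⟩ := exists_eq_ciSup_of_finite (f := extProb p c x)
    have happrox := sub_sum_mul_smax_smul_le (extProb p c x) j hT
    have hTε : ((n + 1 : ℕ) : ℝ) / T = ε := by push_cast [T]; field_simp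
    rw [condErr_surLoss hp1, ← hj]
    linarith
  calc bestErr μ p (surLoss (fun t => 1 - t) c) {h | Measurable h}
      ≤ genErr μ p (surLoss (fun t => 1 - t) c) fun x => T • extProb p c x :=
        csInf_le hbdd ⟨_, hg, rfl⟩
    _ ≤ ∫ x, (1 - ⨆ k, extProb p c x k) + ε ∂μ :=
        integral_mono (integrable_condErr_surLoss hp1 hq hq01 hg)
          ((integrable_one_sub_iSup_extProb hq hq01).add (integrable_const ε)) hpt
    _ = ∫ x, 1 - ⨆ k, extProb p c x k ∂μ + ε := by
        rw [integral_add (integrable_one_sub_iSup_extProb hq hq01) (integrable_const ε)]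
        simp

lemma genErr_defLoss_sub_integral_le [IsFiniteMeasure μ] (hp1 : ∀ x, ∑ y, p x y = 1)
    (hq : ∀ k, Measurable fun x => extProb p c x k)
    (hq01 : ∀ x k, extProb p c x k ∈ Set.Icc (0 : ℝ) 1)
    {pred : (Fin (n + 1) → ℝ) → Fin (n + 1)}
    (hpred : ∀ (v : Fin (n + 1) → ℝ) (j : Fin (n + 1)), v j ≤ v (pred v))
    (hpredmeas : Measurable pred) {h : X → Fin (n + 1) → ℝ} (hh : Measurable h) :
    genErr μ p (defLoss pred c) h - ∫ x, 1 - ⨆ k, extProb p c x k ∂μ ≤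
      ((n : ℝ) + 1) *
        (genErr μ p (surLoss (fun t => 1 - t) c) h - ∫ x, 1 - ⨆ k, extProb p c x k ∂μ) := by
  have hpt : ∀ x, condErr p (defLoss pred c) h x - (1 - ⨆ k, extProb p c x k) ≤
      ((n : ℝ) + 1) *
        (condErr p (surLoss (fun t => 1 - t) c) h x - (1 - ⨆ k, extProb p c x k)) := by
    intro x
    have hmax := sub_le_card_mul_sub_sum_mul_smax
      (fun k => le_ciSup (Finite.bddAbove_range (extProb p c x)) k) (hpred (h x))
    rw [condErr_defLoss hp1, condErr_surLoss hp1]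
    push_cast at hmax
    linarith
  have hM := integrable_one_sub_iSup_extProb (μ := μ) hq hq01
  have hdef := integrable_condErr_defLoss (μ := μ) hp1 hq hq01 hpredmeas hh
  have hsur := integrable_condErr_surLoss (μ := μ) hp1 hq hq01 hh
  simp only [genErr]
  rw [← integral_sub hdef hM, ← integral_sub hsur hM, ← integral_const_mul]
  exact integral_mono (hdef.sub hM) ((hsur.sub hM).const_mul _) hpt

end Errors

theorem excess_bound_Hall_mae_general {X : Type*} [MeasurableSpace X] (μ : Measure X)
    [IsProbabilityMeasure μ] (n : ℕ)
    (p : X → Fin n → ℝ) (hpmeas : ∀ y, Measurable fun x => p x y)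
    (hp0 : ∀ x y, 0 ≤ p x y) (hp1 : ∀ x, ∑ y : Fin n, p x y = 1)
    (c : X → Fin n → ℝ) (hcmeas : ∀ y, Measurable fun x => c x y)
    (hc : ∀ x y, c x y ∈ Set.Icc (0 : ℝ) 1)
    (pred : (Fin (n + 1) → ℝ) → Fin (n + 1))
    (hpred : ∀ (v : Fin (n + 1) → ℝ) (j : Fin (n + 1)), v j ≤ v (pred v))
    (hpredmeas : Measurable pred)
    (h : X → Fin (n + 1) → ℝ) (hh : Measurable h) :
    genErr μ p (defLoss pred c) h
        - bestErr μ p (defLoss pred c) {h' : X → Fin (n + 1) → ℝ | Measurable h'} ≤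
      ((n : ℝ) + 1) *
        (genErr μ p (surLoss (fun t => 1 - t) c) h
          - bestErr μ p (surLoss (fun t => 1 - t) c)
              {h' : X → Fin (n + 1) → ℝ | Measurable h'}) := by
  have hq := measurable_extProb hpmeas hcmeas
  have hq01 := extProb_mem_Icc hp0 hp1 hc
  calc genErr μ p (defLoss pred c) h - bestErr μ p (defLoss pred c) {h' | Measurable h'}
      ≤ genErr μ p (defLoss pred c) h - ∫ x, 1 - ⨆ k, extProb p c x k ∂μ :=
        sub_le_sub_left (integral_le_bestErr_defLoss hp1 hq hq01 hpredmeas) _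
    _ ≤ ((n : ℝ) + 1) *
          (genErr μ p (surLoss (fun t => 1 - t) c) h - ∫ x, 1 - ⨆ k, extProb p c x k ∂μ) :=
        genErr_defLoss_sub_integral_le hp1 hq hq01 hpred hpredmeas hh
    _ ≤ ((n : ℝ) + 1) * (genErr μ p (surLoss (fun t => 1 - t) c) h -
          bestErr μ p (surLoss (fun t => 1 - t) c) {h' | Measurable h'}) := by
        gcongr
        exact bestErr_surLoss_le_integral hp1 hq hq01

/-- excess error bound over the family of all measurable hypotheses for
Ψ(t) = 1 − t and an arbitrary measurable cost `c : X×[n] → [0,1]` (Corollary 4.5):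
for every measurable `h`,
`E_def(h) − E*_def(H_all) ≤ (n+1)·( E_Ψ(h) − E*_Ψ(H_all) )`. -/
theorem excess_bound_Hall_mae {X : Type*} [MeasurableSpace X] (μ : Measure X)
    [IsProbabilityMeasure μ] (n : ℕ) (hn : 2 ≤ n)
    (p : X → Fin n → ℝ) (hpmeas : ∀ y, Measurable fun x => p x y)
    (hp0 : ∀ x y, 0 ≤ p x y) (hp1 : ∀ x, ∑ y : Fin n, p x y = 1)
    (c : X → Fin n → ℝ) (hcmeas : ∀ y, Measurable fun x => c x y)
    (hc : ∀ x y, c x y ∈ Set.Icc (0 : ℝ) 1)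
    (pred : (Fin (n + 1) → ℝ) → Fin (n + 1))
    (hpred : ∀ (v : Fin (n + 1) → ℝ) (j : Fin (n + 1)), v j ≤ v (pred v))
    (hpredmeas : Measurable pred)
    (h : X → Fin (n + 1) → ℝ) (hh : Measurable h) :
    genErr μ p (defLoss pred c) h
        - bestErr μ p (defLoss pred c) {h' : X → Fin (n + 1) → ℝ | Measurable h'} ≤
      ((n : ℝ) + 1) *
        (genErr μ p (surLoss (fun t => 1 - t) c) h
          - bestErr μ p (surLoss (fun t => 1 - t) c)
              {h' : X → Fin (n + 1) → ℝ | Measurable h'}) :=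
  excess_bound_Hall_mae_general μ n p hpmeas hp0 hp1 c hcmeas hc pred hpred hpredmeas h hh
end

section
/- Case-I conditional lower bound for Ψ(t) = 1 − t (from the proof of Theorem 4.3): let Ψ(t) = 1 − t and let i ∈ [n] satisfy p_i = max_{y∈[n]} p_y and h_i = max_{y∈[n]} h_y. Then ΔC_Ψ(h) ≥ (p_i − p_{n+1})·s_{n+1}(h), where s_{n+1}(h) = exp(h_{n+1})/Σ_{y'∈Ȳ} exp(h_{y'}). -/
open Real

/-- Conditional RL2D error `C_Ψ(h) = Σ_y [ q_y Ψ(s_y) + (p_y − q_y) Ψ(s_y + s_{n+1}) ]`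
with `q_y = p_y c_y`; label `Fin.last n` is the deferral label. -/
noncomputable def condC {n : ℕ} (Ψ : ℝ → ℝ) (p c : Fin n → ℝ) (v : Fin (n + 1) → ℝ) : ℝ :=
  ∑ y : Fin n, (p y * c y * Ψ (smax v y.castSucc)
    + (p y - p y * c y) * Ψ (smax v y.castSucc + smax v (Fin.last n)))

/-- Conditional regret `ΔC_Ψ(h) = C_Ψ(h) − inf_{h'} C_Ψ(h')`. -/
noncomputable def condRegret {n : ℕ} (Ψ : ℝ → ℝ) (p c : Fin n → ℝ)
    (v : Fin (n + 1) → ℝ) : ℝ :=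
  condC Ψ p c v - ⨅ v' : Fin (n + 1) → ℝ, condC Ψ p c v'

/-- `P(k)`: `p_k` for `k ∈ [n]` and `p_{n+1} = Σ_y p_y (1 − c_y)` for the deferral label. -/
noncomputable def Pfull {n : ℕ} (p c : Fin n → ℝ) (k : Fin (n + 1)) : ℝ :=
  if h : k = Fin.last n then ∑ y : Fin n, p y * (1 - c y) else p (k.castPred h)

/-- Conditional deferral regret `ΔC_def = max{max_y p_y, p_{n+1}} − P(k)`. -/
noncomputable def defRegret {n : ℕ} (p c : Fin n → ℝ) (k : Fin (n + 1)) : ℝ :=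
  max (⨆ y : Fin n, p y) (∑ y : Fin n, p y * (1 - c y)) - Pfull p c k

lemma sum_exp_pos {m : ℕ} [NeZero m] (v : Fin m → ℝ) : 0 < ∑ y' : Fin m, Real.exp (v y') :=
  Finset.sum_pos (fun y _ => Real.exp_pos _)
    ⟨⟨0, Nat.pos_of_ne_zero (NeZero.ne m)⟩, Finset.mem_univ _⟩

lemma smax_nonneg {m : ℕ} [NeZero m] (v : Fin m → ℝ) (y : Fin m) : 0 ≤ smax v y :=
  div_nonneg (Real.exp_nonneg _) (sum_exp_pos v).le

lemma smax_sum {m : ℕ} [NeZero m] (v : Fin m → ℝ) : ∑ y : Fin m, smax v y = 1 := by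
  unfold smax
  rw [← Finset.sum_div, div_self (sum_exp_pos v).ne']

lemma smax_le_one {m : ℕ} [NeZero m] (v : Fin m → ℝ) (y : Fin m) : smax v y ≤ 1 := by
  have := Finset.single_le_sum (f := smax v) (fun z _ => smax_nonneg v z) (Finset.mem_univ y)
  rwa [smax_sum] at this

lemma sum_smax_castSucc {n : ℕ} (v : Fin (n + 1) → ℝ) :
    ∑ y : Fin n, smax v y.castSucc = 1 - smax v (Fin.last n) := by
  have h := smax_sum v
  rw [Fin.sum_univ_castSucc] at h
  linarith

lemma condC_one_sub {n : ℕ} (p c : Fin n → ℝ) (hp1 : ∑ y : Fin n, p y = 1)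
    (v : Fin (n + 1) → ℝ) :
    condC (fun t => 1 - t) p c v =
      1 - (∑ y : Fin n, p y * smax v y.castSucc)
        - (∑ y : Fin n, p y * (1 - c y)) * smax v (Fin.last n) := by
  unfold condC
  have key : ∀ y : Fin n,
      p y * c y * (1 - smax v y.castSucc)
        + (p y - p y * c y) * (1 - (smax v y.castSucc + smax v (Fin.last n)))
      = p y - p y * smax v y.castSucc - p y * (1 - c y) * smax v (Fin.last n) := by
    intro y; ring
  simp only [key]
  rw [Finset.sum_sub_distrib, Finset.sum_sub_distrib, hp1, ← Finset.sum_mul]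

/-- The infimum of `condC (1 - ·)` is at most `1 - p i`. -/
lemma iInf_condC_le {n : ℕ} (p c : Fin n → ℝ)
    (hp0 : ∀ y, 0 ≤ p y) (hp1 : ∑ y : Fin n, p y = 1)
    (hc : ∀ y, c y ∈ Set.Icc (0 : ℝ) 1) (i : Fin n) :
    (⨅ v' : Fin (n + 1) → ℝ, condC (fun t => 1 - t) p c v') ≤ 1 - p i := by
  have hP0 : 0 ≤ ∑ y : Fin n, p y * (1 - c y) :=
    Finset.sum_nonneg fun y _ => mul_nonneg (hp0 y) (by linarith [(hc y).2])
  have hpi1 : p i ≤ 1 := by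
    have := Finset.single_le_sum (f := p) (fun z _ => hp0 z) (Finset.mem_univ i)
    rwa [hp1] at this
  -- bounded below
  have hbdd : BddBelow (Set.range fun v' : Fin (n + 1) → ℝ => condC (fun t => 1 - t) p c v') := by
    refine ⟨-(∑ y : Fin n, p y * (1 - c y)), ?_⟩
    rintro x ⟨v', rfl⟩
    dsimp only
    rw [condC_one_sub p c hp1 v']
    have h1 : (∑ y : Fin n, p y * smax v' y.castSucc) ≤ 1 := by
      calc (∑ y : Fin n, p y * smax v' y.castSucc) ≤ ∑ y : Fin n, p y :=
            Finset.sum_le_sum fun y _ => by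
              nlinarith [smax_le_one v' y.castSucc, smax_nonneg v' y.castSucc, hp0 y]
        _ = 1 := hp1
    have h2 : (∑ y : Fin n, p y * (1 - c y)) * smax v' (Fin.last n)
        ≤ ∑ y : Fin n, p y * (1 - c y) := by
      nlinarith [smax_le_one v' (Fin.last n), smax_nonneg v' (Fin.last n)]
    linarith
  -- the witnesses: score `t` on coordinate `i`, zero elsewhere
  set g : ℝ → (Fin (n + 1) → ℝ) := fun t k => if k = i.castSucc then t else 0 with hg
  have hval : ∀ t : ℝ,
      condC (fun u => 1 - u) p c (g t) ≤ 1 - p i + n / (Real.exp t + n) := by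
    intro t
    have hden : (0 : ℝ) < Real.exp t + n := by positivity
    have hsum : ∑ k : Fin (n + 1), Real.exp (g t k) = Real.exp t + n := by
      have : ∀ k : Fin (n + 1), Real.exp (g t k)
          = (if k = i.castSucc then Real.exp t - 1 else 0) + 1 := by
        intro k
        by_cases h : k = i.castSucc <;> simp [hg, h]
      simp only [this]
      rw [Finset.sum_add_distrib, Finset.sum_ite_eq' Finset.univ i.castSucc
        (fun _ => Real.exp t - 1)]
      simp only [Finset.mem_univ, if_true, Finset.sum_const, Finset.card_univ,
        Fintype.card_fin, nsmul_eq_mul, mul_one]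
      push_cast
      ring
    have hsi : smax (g t) i.castSucc = Real.exp t / (Real.exp t + n) := by
      unfold smax
      rw [hsum]
      simp [hg]
    rw [condC_one_sub p c hp1 (g t)]
    have h1 : p i * (Real.exp t / (Real.exp t + n)) ≤ ∑ y : Fin n, p y * smax (g t) y.castSucc := by
      rw [← hsi]
      exact Finset.single_le_sum
        (f := fun y : Fin n => p y * smax (g t) y.castSucc)
        (fun z _ => mul_nonneg (hp0 z) (smax_nonneg _ _)) (Finset.mem_univ i)
    have h2 : 0 ≤ (∑ y : Fin n, p y * (1 - c y)) * smax (g t) (Fin.last n) :=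
      mul_nonneg hP0 (smax_nonneg _ _)
    have h3 : p i * (Real.exp t / (Real.exp t + n)) = p i - p i * (n / (Real.exp t + n)) := by
      field_simp
      ring
    have h4 : p i * (n / (Real.exp t + n)) ≤ n / (Real.exp t + n) := by
      have h5 : 0 ≤ (n : ℝ) / (Real.exp t + n) := by positivity
      nlinarith
    linarith
  have hmono : ∀ t : ℝ, (⨅ v' : Fin (n + 1) → ℝ, condC (fun u => 1 - u) p c v')
      ≤ 1 - p i + n / (Real.exp t + n) :=
    fun t => le_trans (ciInf_le hbdd (g t)) (hval t)
  have htend : Filter.Tendsto (fun t : ℝ => 1 - p i + n / (Real.exp t + n))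
      Filter.atTop (nhds (1 - p i)) := by
    have h1 : Filter.Tendsto (fun t : ℝ => Real.exp t + n) Filter.atTop Filter.atTop :=
      Filter.tendsto_atTop_add_const_right _ _ Real.tendsto_exp_atTop
    have h2 : Filter.Tendsto (fun t : ℝ => (n : ℝ) / (Real.exp t + n))
        Filter.atTop (nhds 0) := Filter.Tendsto.div_atTop tendsto_const_nhds h1
    have := Filter.Tendsto.add (tendsto_const_nhds (x := (1 - p i : ℝ)) (f := Filter.atTop)) h2
    simpa using this
  exact ge_of_tendsto htend (Filter.Eventually.of_forall hmono)

/-- Case-I conditional lower bound for Ψ(t) = 1 − t (from the proof of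
Theorem 4.3): if i ∈ [n] satisfies p_i = max_{y∈[n]} p_y and h_i = max_{y∈[n]} h_y,
then ΔC_Ψ(h) ≥ (p_i − p_{n+1})·s_{n+1}(h). -/
theorem caseI_bound_one_sub {n : ℕ} (hn : 2 ≤ n) (p c : Fin n → ℝ)
    (hp0 : ∀ y, 0 ≤ p y) (hp1 : ∑ y : Fin n, p y = 1)
    (hc : ∀ y, c y ∈ Set.Icc (0 : ℝ) 1)
    (v : Fin (n + 1) → ℝ) (i : Fin n)
    (hpi : ∀ y : Fin n, p y ≤ p i)
    (hvi : ∀ y : Fin n, v y.castSucc ≤ v i.castSucc) :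
    condRegret (fun t => 1 - t) p c v ≥
      (p i - ∑ y : Fin n, p y * (1 - c y)) * smax v (Fin.last n) := by
  have hInf := iInf_condC_le p c hp0 hp1 hc i
  have hC := condC_one_sub p c hp1 v
  have hB : (∑ y : Fin n, p y * smax v y.castSucc) ≤ p i * (1 - smax v (Fin.last n)) := by
    calc (∑ y : Fin n, p y * smax v y.castSucc)
        ≤ ∑ y : Fin n, p i * smax v y.castSucc :=
          Finset.sum_le_sum fun y _ =>
            mul_le_mul_of_nonneg_right (hpi y) (smax_nonneg v y.castSucc)
      _ = p i * ∑ y : Fin n, smax v y.castSucc := by rw [Finset.mul_sum]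
      _ = p i * (1 - smax v (Fin.last n)) := by rw [sum_smax_castSucc]
  unfold condRegret
  rw [hC]
  set sL := smax v (Fin.last n)
  set P := ∑ y : Fin n, p y * (1 - c y)
  have : P * sL = P * sL := rfl
  nlinarith [hInf, hB]
end
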